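/- Let X be a finite set and φ : ([0,1]^X) → [0,1] a map preserving 0, partial sums, and scalar multiplication (a generalized effect module morphism, where f ⊎ g is defined iff f+g ≤ 1 pointwise). Then there exists a unique finitely supported subdistribution p on X (∑ p(x) ≤ 1) such that φ(f) = ∑_x f(x) p(x) for all f : X → [0,1]. -/

import Mathlib

/-!
Write `f = ∑ₓ f x • δₓ`. Every partial sum of this decomposition still lies in `[0,1]^X`, so the
partial additivity and homogeneity of `φ` can be applied one point at a time, giving
`φ f = ∑ₓ f x * φ δₓ`. Conversely, evaluating any representing `p` at `f = δₓ` forces `p x = φ δₓ`.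
-/

open Set Finset

section

variable {X : Type*} [DecidableEq X]

theorem sum_single_apply_mem_Icc (s : Finset X) {f : X → ℝ} (hf : ∀ x, f x ∈ Icc (0:ℝ) 1)
    (y : X) : (∑ x ∈ s, Pi.single x (f x)) y ∈ Icc (0:ℝ) 1 := by
  rw [Finset.sum_apply, sum_pi_single]
  split_ifs
  · exact hf y
  · exact ⟨le_rfl, zero_le_one⟩

theorem single_apply_mem_Icc (x : X) {a : ℝ} (ha : a ∈ Icc (0:ℝ) 1) (y : X) :
    (Pi.single x a : X → ℝ) y ∈ Icc (0:ℝ) 1 := by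
  rw [Pi.single_apply]
  split_ifs
  · exact ha
  · exact ⟨le_rfl, zero_le_one⟩

theorem map_sum_single {φ : (X → ℝ) → ℝ} (hzero : φ 0 = 0)
    (hadd : ∀ f g : X → ℝ, (∀ x, f x ∈ Icc (0:ℝ) 1) → (∀ x, g x ∈ Icc (0:ℝ) 1) →
        (∀ x, f x + g x ≤ 1) → φ (f + g) = φ f + φ g)
    (hsmul : ∀ (r : ℝ) (f : X → ℝ), r ∈ Icc (0:ℝ) 1 →
        (∀ x, f x ∈ Icc (0:ℝ) 1) → φ (r • f) = r * φ f)
    (s : Finset X) {f : X → ℝ} (hf : ∀ x, f x ∈ Icc (0:ℝ) 1) :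
    φ (∑ x ∈ s, Pi.single x (f x)) = ∑ x ∈ s, f x * φ (Pi.single x 1 : X → ℝ) := by
  induction s using Finset.induction_on with
  | empty => simp [hzero]
  | @insert a s ha ih =>
    have hsingle : Pi.single a (f a) = f a • Pi.single a (1:ℝ) := by
      rw [← Pi.single_smul', smul_eq_mul, mul_one]
    -- the two summands add up to the partial sum over `insert a s`, which stays in the cube
    have hle (y : X) : (Pi.single a (f a) : X → ℝ) y + (∑ x ∈ s, Pi.single x (f x)) y ≤ 1 := by
      simpa [sum_insert ha] using (sum_single_apply_mem_Icc (insert a s) hf y).2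
    rw [sum_insert ha, sum_insert ha,
      hadd _ _ (single_apply_mem_Icc a (hf a)) (sum_single_apply_mem_Icc s hf) hle,
      hsingle, hsmul _ _ (hf a) (single_apply_mem_Icc a (right_mem_Icc.2 zero_le_one)), ih]

end

/-- Healthiness for the subdistribution monad on a finite set `X` with the
total modality: every map `φ : [0,1]^X → [0,1]` preserving `0`, partial sums
and scalar multiplication is of the form `f ↦ ∑_x f(x)·p(x)` for a unique
subdistribution `p` on `X`. -/
theorem stmt_13 (X : Type) [Fintype X] (φ : (X → ℝ) → ℝ)
    (hmaps : ∀ f : X → ℝ, (∀ x, f x ∈ Icc (0:ℝ) 1) → φ f ∈ Icc (0:ℝ) 1)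
    (hzero : φ 0 = 0)
    (hadd : ∀ f g : X → ℝ, (∀ x, f x ∈ Icc (0:ℝ) 1) → (∀ x, g x ∈ Icc (0:ℝ) 1) →
        (∀ x, f x + g x ≤ 1) → φ (f + g) = φ f + φ g)
    (hsmul : ∀ (r : ℝ) (f : X → ℝ), r ∈ Icc (0:ℝ) 1 →
        (∀ x, f x ∈ Icc (0:ℝ) 1) → φ (r • f) = r * φ f) :
    ∃! p : X → ℝ,
      (∀ x, p x ∈ Icc (0:ℝ) 1) ∧ (∑ x, p x ≤ 1) ∧
      ∀ f : X → ℝ, (∀ x, f x ∈ Icc (0:ℝ) 1) → φ f = ∑ x, f x * p x := by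
  classical
  have hrepr (f : X → ℝ) (hf : ∀ x, f x ∈ Icc (0:ℝ) 1) :
      φ f = ∑ x, f x * φ (Pi.single x 1 : X → ℝ) := by
    simpa only [univ_sum_single] using map_sum_single hzero hadd hsmul univ hf
  have hone : (1:ℝ) ∈ Icc (0:ℝ) 1 := right_mem_Icc.2 zero_le_one
  have hconst_one : ∀ x : X, (1 : X → ℝ) x ∈ Icc (0:ℝ) 1 := fun _ => hone
  refine ⟨fun x => φ (Pi.single x 1 : X → ℝ),
    ⟨fun x => hmaps _ (single_apply_mem_Icc x hone), ?_, hrepr⟩, ?_⟩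
  · simpa [hrepr 1 hconst_one] using (hmaps 1 hconst_one).2
  · rintro q ⟨-, -, hq⟩
    funext x
    simpa [Pi.single_apply] using (hq _ (single_apply_mem_Icc x hone)).symm
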